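/- Every free product of two nontrivial finite cyclic groups, at least one of order ≥ 3, embeds into the group of homeomorphisms of the Cantor set {0,1}^ℕ. More precisely, given m ≥ 3 and n ≥ 2, there exist subgroups G ≅ Z/m and H ≅ Z/n of Homeo({0,1}^ℕ) such that ⟨G, H⟩ ≅ Z/m * Z/n. -/

import Mathlib

/-!
Choose a homeomorphism `e : ℤ/m × Cantor ≃ₜ Cantor` carrying the slice `{0} × Cantor` onto the
cylinder `{x | x 0 = true}`; conjugating translation in the first factor by `e` gives an action
of `ℤ/m` in which every nontrivial element moves that cylinder into its complement. Doing the same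
for `ℤ/n` with the cylinder `{x | x 0 = false}` puts us in the situation of the ping-pong lemma.
The homeomorphisms `Fin (k + 1) × Cantor ≃ₜ Cantor` come from the prefix code
`0, 10, 110, …, 1ᵏ`, built one bit at a time.
-/

/-- The group of self-homeomorphisms of a topological space, with
`(f * g) x = f (g x)`. -/
instance homeoGroup {X : Type*} [TopologicalSpace X] : Group (X ≃ₜ X) where
  mul f g := g.trans f
  one := Homeomorph.refl X
  inv := Homeomorph.symm
  mul_assoc _ _ _ := Homeomorph.ext fun _ => rfl
  one_mul _ := Homeomorph.ext fun _ => rfl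
  mul_one _ := Homeomorph.ext fun _ => rfl
  inv_mul_cancel f := Homeomorph.ext fun x => f.symm_apply_apply x

/-- The Cantor set `{0,1}^ℕ`. -/
abbrev Cantor : Type := ℕ → Bool

universe u

namespace Monoid.Coprod

open Cardinal Pointwise

variable {G H : Type u} [Group G] [Group H]

/- Mathlib's ping-pong lemma is stated for indexed coproducts, so we embed `G ∗ H` into the
`Bool`-indexed one. -/

instance instGroupCond : ∀ b : Bool, Group (cond b G H)
  | true => ‹Group G›
  | false => ‹Group H›

def toCoprodI : G ∗ H →* CoprodI (fun b : Bool => cond b G H) :=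
  lift (CoprodI.of (M := fun b : Bool => cond b G H) (i := true))
    (CoprodI.of (M := fun b : Bool => cond b G H) (i := false))

def ofCoprodI : CoprodI (fun b : Bool => cond b G H) →* G ∗ H :=
  CoprodI.lift fun
    | true => inl
    | false => inr

theorem ofCoprodI_toCoprodI (x : G ∗ H) : ofCoprodI (toCoprodI x) = x := by
  suffices ofCoprodI.comp toCoprodI = MonoidHom.id (G ∗ H) from DFunLike.congr_fun this x
  refine hom_ext ?_ ?_ <;> ext <;> simp [toCoprodI, ofCoprodI]

theorem toCoprodI_injective : Function.Injective (toCoprodI (G := G) (H := H)) :=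
  Function.LeftInverse.injective ofCoprodI_toCoprodI

theorem lift_injective_of_ping_pong {K α : Type*} [Group K] [MulAction K α]
    (f : G →* K) (g : H →* K) (hcard : 3 ≤ #G ∨ 3 ≤ #H) (X Y : Set α)
    (hX : X.Nonempty) (hY : Y.Nonempty) (hXY : Disjoint X Y)
    (hf : ∀ a, a ≠ 1 → f a • Y ⊆ X) (hg : ∀ b, b ≠ 1 → g b • X ⊆ Y) :
    Function.Injective (lift f g) := by
  let F : ∀ b : Bool, cond b G H →* K := fun
    | true => f
    | false => g
  have hlift : lift f g = (CoprodI.lift F).comp toCoprodI := by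
    refine hom_ext ?_ ?_ <;> ext <;> simp [toCoprodI, F]
  rw [hlift, MonoidHom.coe_comp]
  refine Function.Injective.comp ?_ toCoprodI_injective
  refine CoprodI.lift_injective_of_ping_pong F ?_ (fun b => cond b X Y) ?_ ?_ ?_
  · exact .inr (hcard.elim (⟨true, ·⟩) (⟨false, ·⟩))
  · rintro (_ | _) <;> assumption
  · rintro (_ | _) (_ | _) hij <;>
      first | exact absurd rfl hij | simp [Function.onFun, hXY, hXY.symm]
  · rintro (_ | _) (_ | _) hij <;>
      first | exact absurd rfl hij | simpa [F] using hg | simpa [F] using hf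

end Monoid.Coprod

namespace Homeomorph

open Pointwise

variable {X : Type*} [TopologicalSpace X]

instance applyMulAction : MulAction (X ≃ₜ X) X where
  smul f x := f x
  one_smul _ := rfl
  mul_smul _ _ _ := rfl

theorem smul_def (f : X ≃ₜ X) (x : X) : f • x = f x := rfl

def natCons (α : Type*) [TopologicalSpace α] : α × (ℕ → α) ≃ₜ (ℕ → α) where
  toFun p
    | 0 => p.1
    | n + 1 => p.2 n
  invFun x := (x 0, fun n => x (n + 1))
  left_inv _ := rfl
  right_inv x := funext fun n => by cases n <;> rfl
  continuous_toFun := continuous_pi fun n => by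
    cases n
    · exact continuous_fst
    · exact (continuous_apply _).comp continuous_snd
  continuous_invFun := by fun_prop

variable {A Y : Type*} [AddGroup A] [TopologicalSpace A] [SeparatelyContinuousAdd A]
  [TopologicalSpace Y]

def translateHom (e : A × Y ≃ₜ X) : Multiplicative A →* (X ≃ₜ X) where
  toFun a := e.symm.trans ((prodCongr (Homeomorph.addLeft a.toAdd) (Homeomorph.refl Y)).trans e)
  map_one' := Homeomorph.ext fun x => by simp [Prod.map]
  map_mul' a b := Homeomorph.ext fun x => by
    show e (_, _) = e (_, _)
    simp [add_assoc]

theorem translateHom_apply (e : A × Y ≃ₜ X) (a : Multiplicative A) (c : A) (y : Y) :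
    translateHom e a (e (c, y)) = e (a.toAdd + c, y) := by
  simp [translateHom]

theorem translateHom_smul_subset_compl (e : A × Y ≃ₜ X) {S : Set X}
    (hS : ∀ c y, e (c, y) ∈ S ↔ c = 0) {a : Multiplicative A} (ha : a ≠ 1) :
    translateHom e a • S ⊆ Sᶜ := by
  rintro _ ⟨x, hx, rfl⟩
  obtain ⟨⟨c, y⟩, rfl⟩ := e.surjective x
  obtain rfl : c = 0 := (hS c y).1 hx
  simpa [smul_def, translateHom_apply, hS] using ha

end Homeomorph

namespace Cantor

variable {k : ℕ}

def prependBitFun (b : Bool) (g : Fin (k + 1) × Cantor ≃ₜ Cantor) (p : Fin (k + 2) × Cantor) :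
    Cantor :=
  Homeomorph.natCons Bool <| Fin.cases (b, p.2) (fun j => (!b, g (j, p.2))) p.1

theorem prependBitFun_bijective (b : Bool) (g : Fin (k + 1) × Cantor ≃ₜ Cantor) :
    Function.Bijective (prependBitFun b g) := by
  refine ⟨?_, fun x => ?_⟩
  · rintro ⟨i, y⟩ ⟨i', y'⟩ h
    have := (Homeomorph.natCons Bool).injective h
    cases i using Fin.cases <;> cases i' using Fin.cases <;> simp_all [prependBitFun]
  · obtain ⟨⟨c, t⟩, rfl⟩ := (Homeomorph.natCons Bool).surjective x
    by_cases hc : c = b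
    · exact ⟨(0, t), by simp [prependBitFun, hc]⟩
    · obtain ⟨⟨j, y⟩, rfl⟩ := g.surjective t
      exact ⟨(j.succ, y), by simp [prependBitFun, Bool.eq_not_iff.2 hc]⟩

theorem continuous_prependBitFun (b : Bool) (g : Fin (k + 1) × Cantor ≃ₜ Cantor) :
    Continuous (prependBitFun b g) :=
  continuous_prod_of_discrete_left.2 fun i => by
    cases i using Fin.cases <;>
      simp only [prependBitFun, Fin.cases_zero, Fin.cases_succ] <;> fun_prop

noncomputable def prependBit (b : Bool) (g : Fin (k + 1) × Cantor ≃ₜ Cantor) :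
    Fin (k + 2) × Cantor ≃ₜ Cantor :=
  (continuous_prependBitFun b g).homeoOfEquivCompactToT2
    (f := .ofBijective _ (prependBitFun_bijective b g))

theorem prependBit_apply_zero_eq_iff (b : Bool) (g : Fin (k + 1) × Cantor ≃ₜ Cantor)
    (i : Fin (k + 2)) (y : Cantor) : prependBit b g (i, y) 0 = b ↔ i = 0 := by
  change prependBitFun b g (i, y) 0 = b ↔ i = 0
  cases i using Fin.cases <;> simp [prependBitFun, Homeomorph.natCons, Fin.succ_ne_zero]

theorem nonempty_fin_prod_homeomorph : ∀ k : ℕ, Nonempty (Fin (k + 1) × Cantor ≃ₜ Cantor)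
  | 0 => ⟨Homeomorph.uniqueProd (Fin 1) Cantor⟩
  | k + 1 => (nonempty_fin_prod_homeomorph k).map (prependBit false)

theorem exists_zmod_prod_homeomorph {m : ℕ} (hm : 2 ≤ m) (b : Bool) :
    ∃ e : ZMod m × Cantor ≃ₜ Cantor, ∀ a y, e (a, y) ∈ {x : Cantor | x 0 = b} ↔ a = 0 := by
  obtain ⟨k, rfl⟩ := Nat.exists_eq_add_of_le' hm
  obtain ⟨g⟩ := nonempty_fin_prod_homeomorph k
  refine ⟨(Homeomorph.prodCongr (.ofDiscrete (ZMod.finEquiv _).symm.toEquiv) (.refl _)).trans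
    (prependBit b g), fun a y => ?_⟩
  simp [prependBit_apply_zero_eq_iff, Homeomorph.ofDiscrete]

end Cantor

/-- Every free product `Z/m * Z/n` of two nontrivial finite cyclic groups
with `m ≥ 3` and `n ≥ 2` embeds into the group of homeomorphisms of the
Cantor set: there is an injective homomorphism
`Z/m * Z/n → Homeo({0,1}^ℕ)` (whose restrictions to the factors give
subgroups `G ≅ Z/m`, `H ≅ Z/n` with `⟨G, H⟩ ≅ Z/m * Z/n`). -/
theorem cyclic_free_product_embeds_homeo_cantor (m n : ℕ) (hm : 3 ≤ m) (hn : 2 ≤ n) :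
    ∃ φ : Monoid.Coprod (Multiplicative (ZMod m)) (Multiplicative (ZMod n)) →*
        (Cantor ≃ₜ Cantor),
      Function.Injective φ := by
  obtain ⟨e, he⟩ := Cantor.exists_zmod_prod_homeomorph (by omega : 2 ≤ m) true
  obtain ⟨e', he'⟩ := Cantor.exists_zmod_prod_homeomorph hn false
  have hcard : 3 ≤ Cardinal.mk (Multiplicative (ZMod m)) := by
    have : NeZero m := ⟨by omega⟩
    rw [Cardinal.mk_multiplicative, ← Nat.cast_card, Nat.card_zmod]
    exact_mod_cast hm
  refine ⟨Monoid.Coprod.lift (Homeomorph.translateHom e) (Homeomorph.translateHom e'),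
    Monoid.Coprod.lift_injective_of_ping_pong _ _ (.inl hcard) {x : Cantor | x 0 = false}
      {x | x 0 = true} ⟨fun _ => false, rfl⟩ ⟨fun _ => true, rfl⟩ ?_ ?_ ?_⟩
  · exact Set.disjoint_left.2 fun x h₁ h₂ => by simp_all
  · exact fun a ha =>
      (Homeomorph.translateHom_smul_subset_compl e he ha).trans (by simp [Set.compl_ofPred])
  · exact fun b hb =>
      (Homeomorph.translateHom_smul_subset_compl e' he' hb).trans (by simp [Set.compl_ofPred])
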